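/- In any (θ₁, θ₂, …, θ_k)-representation of K_{n×3} with θ₁ < θ₂ < ⋯ < θ_k, for any colors i, j, ℓ ∈ {1, 2, …, ⌈(k+1)/2⌉}, there do not exist two distinct parts such that one has color ijj and the other has color iℓℓ. -/

import Mathlib

open Finset

/-- The disjoint union of `n` copies of the complete graph `K_m`,
on vertex set `Fin n × Fin m`. -/
def copiesK (n m : ℕ) : SimpleGraph (Fin n × Fin m) where
  Adj x y := x.1 = y.1 ∧ x ≠ y
  symm := ⟨fun x y h => ⟨h.1.symm, h.2.symm⟩⟩
  loopless := ⟨fun x h => h.2 rfl⟩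

/-- The complete `n`-partite graph with `m` vertices in each part,
on vertex set `Fin n × Fin m`. -/
def completeMulti (n m : ℕ) : SimpleGraph (Fin n × Fin m) where
  Adj x y := x.1 ≠ y.1
  symm := ⟨fun x y h => h.symm⟩
  loopless := ⟨fun x h => h rfl⟩

/-- `r` together with the strictly increasing thresholds `θ₁ < ⋯ < θ_k` is a
`(θ₁, …, θ_k)`-representation of `G`: for distinct `u v`, `uv` is an edge iff the
number of thresholds not exceeding `r u + r v` is odd. -/
def IsRep {V : Type*} {k : ℕ} (G : SimpleGraph V) (θ : Fin k → ℝ) (r : V → ℝ) : Prop :=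
  StrictMono θ ∧ ∀ u v : V, u ≠ v →
    (G.Adj u v ↔ Odd (Finset.univ.filter (fun i => θ i ≤ r u + r v)).card)

/-- `G` is a `k`-threshold graph. -/
def IsKThreshold {V : Type*} (G : SimpleGraph V) (k : ℕ) : Prop :=
  ∃ (θ : Fin k → ℝ) (r : V → ℝ), IsRep G θ r

/-- The threshold number `Θ(G)`: the least `k` for which `G` is a `k`-threshold graph. -/
noncomputable def thresholdNumber {V : Type*} (G : SimpleGraph V) : ℕ :=
  sInf {k | IsKThreshold G k}

/-- The 1-based color of an edge with rank sum `s`: it equals `i` exactly when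
`s ∈ [θ_{2i-1}, θ_{2i})` (1-based indexing, with `θ_{k+1} = ∞`), i.e. when the number
of thresholds not exceeding `s` equals `2i - 1`. -/
noncomputable def edgeColor {k : ℕ} (θ : Fin k → ℝ) (s : ℝ) : ℕ :=
  ((Finset.univ.filter (fun i => θ i ≤ s)).card + 1) / 2

/-- The 1-based color of a nonedge with rank sum `s`: it equals `i` exactly when
`s ∈ [θ_{2i-2}, θ_{2i-1})` (1-based indexing, with `θ₀ = -∞`), i.e. when the number
of thresholds not exceeding `s` equals `2i - 2`. -/
noncomputable def nonedgeColor {k : ℕ} (θ : Fin k → ℝ) (s : ℝ) : ℕ :=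
  (Finset.univ.filter (fun i => θ i ≤ s)).card / 2 + 1

/-- The multiset of colors on the three edges of the `t`-th triangle of `nK₃`. -/
noncomputable def triColors3 {n k : ℕ} (θ : Fin k → ℝ) (r : Fin n × Fin 3 → ℝ) (t : Fin n) :
    Multiset ℕ :=
  {edgeColor θ (r (t, 0) + r (t, 1)), edgeColor θ (r (t, 0) + r (t, 2)),
    edgeColor θ (r (t, 1) + r (t, 2))}

/-- The multiset of colors on the three nonedges of the `t`-th part of `K_{n×3}`. -/
noncomputable def partColors3 {n k : ℕ} (θ : Fin k → ℝ) (r : Fin n × Fin 3 → ℝ) (t : Fin n) :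
    Multiset ℕ :=
  {nonedgeColor θ (r (t, 0) + r (t, 1)), nonedgeColor θ (r (t, 0) + r (t, 2)),
    nonedgeColor θ (r (t, 1) + r (t, 2))}

/-!
Let `N s = thresholdCount θ s` be the number of thresholds `≤ s`; it is monotone, even on the
rank sums inside a part and odd on the rank sums across two parts. In a part of color `ijj` the
two nonedges of color `j` meet in an apex `c`; the other two ranks `p ≤ q` form the base, of
color `i`. Since `N (p + c) = N (q + c)` is even, no rank `y` of another part lies in `[p, q]`,
for `N (y + c)` would be squeezed between them. So the bases `[p, q]`, `[p', q']` of two parts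
of colors `ijj` and `iℓℓ` are disjoint, say `q < p'`, and then the odd `N (q + p')` is squeezed
between `N (p + q) = N (p' + q')`, which is even.
-/

open Set

theorem Monotone.not_odd_of_mem_Icc {α : Type*} [Preorder α] {m : α → ℕ} (hm : Monotone m)
    {s t u : α} (hst : m s = m t) (hs : Even (m s)) (hu : u ∈ Icc s t) : ¬Odd (m u) := by
  rw [le_antisymm (hst ▸ hm hu.2) (hm hu.1), Nat.not_odd_iff_even]
  exact hs

def IsIsoscelesBase (m : ℝ → ℕ) (A : Set ℝ) (p q : ℝ) : Prop :=
  p ∈ A ∧ q ∈ A ∧ p ≤ q ∧ ∃ c ∈ A, m (p + c) = m (q + c) ∧ Even (m (p + c))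

namespace IsIsoscelesBase

variable {m : ℝ → ℕ} {A B : Set ℝ} {p q p' q' : ℝ}

theorem notMem_Icc (hm : Monotone m) (hA : IsIsoscelesBase m A p q)
    (hAB : ∀ x ∈ A, ∀ y ∈ B, Odd (m (x + y))) {y : ℝ} (hy : y ∈ B) : y ∉ Icc p q := by
  obtain ⟨-, -, -, c, hc, hpc, heven⟩ := hA
  intro hyI
  refine hm.not_odd_of_mem_Icc hpc heven ⟨add_le_add_left hyI.1 c, add_le_add_left hyI.2 c⟩ ?_
  rw [add_comm]
  exact hAB c hc y hy

theorem false_of_lt (hm : Monotone m) (hA : IsIsoscelesBase m A p q)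
    (hB : IsIsoscelesBase m B p' q') (hAB : ∀ x ∈ A, ∀ y ∈ B, Odd (m (x + y)))
    (hbase : m (p + q) = m (p' + q')) (heven : Even (m (p + q))) (hlt : q < p') : False :=
  hm.not_odd_of_mem_Icc hbase heven ⟨by linarith [hA.2.2.1], by linarith [hB.2.2.1]⟩
    (hAB q hA.2.1 p' hB.1)

theorem not_forall_odd_add (hm : Monotone m) (hA : IsIsoscelesBase m A p q)
    (hB : IsIsoscelesBase m B p' q') (hbase : m (p + q) = m (p' + q'))
    (heven : Even (m (p + q))) : ¬∀ x ∈ A, ∀ y ∈ B, Odd (m (x + y)) := by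
  intro hAB
  have hBA : ∀ y ∈ B, ∀ x ∈ A, Odd (m (y + x)) := fun y hy x hx => add_comm x y ▸ hAB x hx y hy
  have hp' := hA.notMem_Icc hm hAB hB.1
  have hp := hB.notMem_Icc hm hBA hA.1
  simp only [Set.mem_Icc, not_and_or, not_le] at hp hp'
  rcases hp' with hp' | hp'
  · rcases hp with hp | hp
    · linarith [hA.2.2.1, hB.2.2.1]
    · exact hB.false_of_lt hm hA hBA hbase.symm (hbase ▸ heven) hp
  · exact hA.false_of_lt hm hB hAB hbase heven hp'

end IsIsoscelesBase

theorem Multiset.eq_of_triple_eq {α : Type*} {x y z i j : α}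
    (h : ({x, y, z} : Multiset α) = {i, j, j}) :
    x = i ∧ y = j ∧ z = j ∨ x = j ∧ y = i ∧ z = j ∨ x = j ∧ y = j ∧ z = i := by
  simp only [Multiset.insert_eq_cons, Multiset.cons_eq_cons, Multiset.singleton_eq_cons_iff] at h
  aesop

noncomputable def thresholdCount {k : ℕ} (θ : Fin k → ℝ) (s : ℝ) : ℕ :=
  #{i | θ i ≤ s}

theorem thresholdCount_mono {k : ℕ} (θ : Fin k → ℝ) : Monotone (thresholdCount θ) :=
  fun _ _ hst => card_le_card fun _ => by simpa using (le_trans · hst)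

theorem thresholdCount_eq_of_nonedgeColor_eq {k : ℕ} {θ : Fin k → ℝ} {s t : ℝ}
    (hs : Even (thresholdCount θ s)) (ht : Even (thresholdCount θ t))
    (h : nonedgeColor θ s = nonedgeColor θ t) : thresholdCount θ s = thresholdCount θ t := by
  obtain ⟨a, ha⟩ := hs
  obtain ⟨b, hb⟩ := ht
  change thresholdCount θ s / 2 + 1 = thresholdCount θ t / 2 + 1 at h
  omega

namespace IsRep

variable {n m k : ℕ} {θ : Fin k → ℝ} {r : Fin n × Fin m → ℝ}

theorem odd_thresholdCount (hrep : IsRep (completeMulti n m) θ r) {x y : Fin n × Fin m}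
    (hxy : x.1 ≠ y.1) : Odd (thresholdCount θ (r x + r y)) :=
  (hrep.2 x y fun h => hxy (congrArg Prod.fst h)).mp hxy

theorem even_thresholdCount (hrep : IsRep (completeMulti n m) θ r) (t : Fin n) {a b : Fin m}
    (hab : a ≠ b) : Even (thresholdCount θ (r (t, a) + r (t, b))) := by
  rw [← Nat.not_odd_iff_even]
  exact fun hodd => (hrep.2 (t, a) (t, b) fun h => hab (congrArg Prod.snd h)).mpr hodd rfl

theorem exists_isoscelesBase (hrep : IsRep (completeMulti n m) θ r) {t : Fin n}
    {u v w : Fin m} (huw : u ≠ w) (hvw : v ≠ w)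
    (hc : nonedgeColor θ (r (t, u) + r (t, w)) = nonedgeColor θ (r (t, v) + r (t, w))) :
    ∃ p q, IsIsoscelesBase (thresholdCount θ) (range fun a => r (t, a)) p q ∧
      p + q = r (t, u) + r (t, v) := by
  have heven := hrep.even_thresholdCount t huw
  have hcount := thresholdCount_eq_of_nonedgeColor_eq heven
    (hrep.even_thresholdCount t hvw) hc
  rcases le_total (r (t, u)) (r (t, v)) with h | h
  · exact ⟨_, _, ⟨⟨u, rfl⟩, ⟨v, rfl⟩, h, _, ⟨w, rfl⟩, hcount, heven⟩, rfl⟩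
  · exact ⟨_, _, ⟨⟨v, rfl⟩, ⟨u, rfl⟩, h, _, ⟨w, rfl⟩, hcount.symm, hcount ▸ heven⟩,
      add_comm _ _⟩

theorem exists_isoscelesBase_of_partColors3_eq {r : Fin n × Fin 3 → ℝ}
    (hrep : IsRep (completeMulti n 3) θ r) {t : Fin n} {i j : ℕ} (h : partColors3 θ r t = {i, j, j}) :
    ∃ p q, IsIsoscelesBase (thresholdCount θ) (range fun a => r (t, a)) p q ∧
      nonedgeColor θ (p + q) = i ∧ Even (thresholdCount θ (p + q)) := by
  obtain ⟨u, v, w, huv, huw, hvw, hc, hi⟩ : ∃ u v w : Fin 3, u ≠ v ∧ u ≠ w ∧ v ≠ w ∧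
      nonedgeColor θ (r (t, u) + r (t, w)) = nonedgeColor θ (r (t, v) + r (t, w)) ∧
      nonedgeColor θ (r (t, u) + r (t, v)) = i := by
    rcases Multiset.eq_of_triple_eq h with ⟨h01, h02, h12⟩ | ⟨h01, h02, h12⟩ | ⟨h01, h02, h12⟩
    · exact ⟨0, 1, 2, by decide, by decide, by decide, h02.trans h12.symm, h01⟩
    · refine ⟨0, 2, 1, by decide, by decide, by decide, ?_, h02⟩
      rw [add_comm (r (t, 2))]
      exact h01.trans h12.symm
    · refine ⟨1, 2, 0, by decide, by decide, by decide, ?_, h12⟩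
      rw [add_comm (r (t, 1)), add_comm (r (t, 2))]
      exact h01.trans h02.symm
  obtain ⟨p, q, hbase, hpq⟩ := hrep.exists_isoscelesBase huw hvw hc
  exact ⟨p, q, hbase, hpq ▸ hi, hpq ▸ hrep.even_thresholdCount t huv⟩

end IsRep

theorem stmt8_general (n k : ℕ) (θ : Fin k → ℝ) (r : Fin n × Fin 3 → ℝ)
    (hrep : IsRep (completeMulti n 3) θ r) (i j l : ℕ) :
    ¬ ∃ t₁ t₂ : Fin n, t₁ ≠ t₂ ∧
        partColors3 θ r t₁ = {i, j, j} ∧ partColors3 θ r t₂ = {i, l, l} := by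
  rintro ⟨t₁, t₂, hne, h₁, h₂⟩
  obtain ⟨p, q, hA, hpq, hpq_even⟩ := hrep.exists_isoscelesBase_of_partColors3_eq h₁
  obtain ⟨p', q', hB, hpq', hpq'_even⟩ := hrep.exists_isoscelesBase_of_partColors3_eq h₂
  refine hA.not_forall_odd_add (thresholdCount_mono θ) hB
    (thresholdCount_eq_of_nonedgeColor_eq hpq_even hpq'_even (hpq.trans hpq'.symm)) hpq_even ?_
  rintro _ ⟨a, rfl⟩ _ ⟨b, rfl⟩
  exact hrep.odd_thresholdCount hne

/-- In any `(θ₁, …, θ_k)`-representation of `K_{n×3}`, for colors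
`i, j, ℓ ∈ {1, …, ⌈(k+1)/2⌉}`, there do not exist two distinct parts, one of color
`ijj` and the other of color `iℓℓ`. -/
theorem stmt8 (n k : ℕ) (θ : Fin k → ℝ) (r : Fin n × Fin 3 → ℝ)
    (hrep : IsRep (completeMulti n 3) θ r) (i j l : ℕ)
    (hi1 : 1 ≤ i) (hi2 : i ≤ (k + 2) / 2)
    (hj1 : 1 ≤ j) (hj2 : j ≤ (k + 2) / 2)
    (hl1 : 1 ≤ l) (hl2 : l ≤ (k + 2) / 2) :
    ¬ ∃ t₁ t₂ : Fin n, t₁ ≠ t₂ ∧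
        partColors3 θ r t₁ = {i, j, j} ∧ partColors3 θ r t₂ = {i, l, l} :=
  stmt8_general n k θ r hrep i j l
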